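/- Let k ≥ 3 be an integer, let 𝔽 be a finite field of order q, and let S ⊆ X = 𝔽² be nonempty with |S| = rq (so r = |S|/q > 0 is a real number). For 0 < δ < 1, let Y_δ be the set of all y ∈ Y = 𝔽^{k−1} such that (1−δ)r ≤ |N(y) ∩ S| ≤ (1+δ)r, where N(y) denotes the neighborhood of y in Γ_{q,k−1}. Then |Y_δ| ≥ (1 − 2/(δ²r))·q^{k−1}. -/

import Mathlib

/-!
A second-moment argument. Reading `y ∈ 𝔽^m` as the polynomial `∑ yᵢ Xⁱ`, evaluation at one
point, and at two distinct points, is a surjective additive map onto `𝔽`, resp. `𝔽²`. Hence every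
`x ∈ X` has `q^(m-1)` neighbours, two points with distinct first coordinates have `q^(m-2)` common
neighbours, and two distinct points with equal first coordinates have none. Double counting then
shows that `|N(y) ∩ S|` has mean `r` and variance at most `r` over `y ∈ 𝔽^m`, and Chebyshev's
inequality bounds the number of `y` with `||N(y) ∩ S| - r| > δ r` by `q^m / (δ² r)`.
-/
open Finset

namespace AddMonoidHom

lemma card_fiber_mul_card_eq {G H : Type*} [AddGroup G] [Fintype G] [AddGroup H] [Fintype H]
    [DecidableEq H] (f : G →+ H) (hf : Function.Surjective f) (h : H) :
    #{g | f g = h} * Fintype.card H = Fintype.card G := by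
  calc #{g | f g = h} * Fintype.card H = ∑ h' : H, #{g | f g = h'} := by
        rw [sum_congr rfl fun h' _ => card_fiber_eq_of_mem_range f (hf h') (hf h), sum_const,
          card_univ, smul_eq_mul, mul_comm]
    _ = Fintype.card G := (card_eq_sum_card_fiberwise (by simp)).symm

end AddMonoidHom

section CoeffEval

variable {R : Type*} [CommRing R] {m : ℕ}

def coeffEval (m : ℕ) (a : R) : (Fin m → R) →+ R :=
  AddMonoidHom.mk' (fun y => ∑ i, y i * a ^ (i : ℕ)) fun y z => by
    simp only [Pi.add_apply, add_mul, sum_add_distrib]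

lemma coeffEval_apply (a : R) (y : Fin m → R) : coeffEval m a y = ∑ i, y i * a ^ (i : ℕ) := rfl

lemma coeffEval_single (a : R) (j : Fin m) (c : R) :
    coeffEval m a (Pi.single j c) = c * a ^ (j : ℕ) := by
  simp [coeffEval_apply, Pi.single_apply]

lemma coeffEval_surjective (hm : 0 < m) (a : R) : Function.Surjective (coeffEval m a) :=
  fun b => ⟨Pi.single ⟨0, hm⟩ b, by simp [coeffEval_single]⟩

lemma coeffEval_prod_surjective {K : Type*} [Field K] (hm : 2 ≤ m) {a a' : K} (h : a ≠ a') :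
    Function.Surjective ((coeffEval m a).prod (coeffEval m a')) := by
  intro ⟨b, b'⟩
  -- the line through `(a, b)` and `(a', b')`
  set d := (b - b') / (a - a')
  refine ⟨Pi.single ⟨0, by omega⟩ (b - d * a) + Pi.single ⟨1, hm⟩ d, ?_⟩
  simp only [AddMonoidHom.prod_apply, map_add, coeffEval_single, Prod.mk_add_mk, pow_zero, mul_one,
    pow_one, Prod.mk.injEq, sub_add_cancel, true_and]
  have hd : d * (a - a') = b - b' := div_mul_cancel₀ _ (sub_ne_zero.mpr h)
  linear_combination -hd

lemma card_coeffEval_fiber [Fintype R] [DecidableEq R] (hm : 0 < m) (a b : R) :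
    #{y : Fin m → R | coeffEval m a y = b} = Fintype.card R ^ (m - 1) := by
  have hcard := (coeffEval m a).card_fiber_mul_card_eq (coeffEval_surjective hm a) b
  rw [Fintype.card_fun, Fintype.card_fin, ← pow_sub_mul_pow _ hm, pow_one] at hcard
  exact Nat.eq_of_mul_eq_mul_right Fintype.card_pos hcard

lemma card_coeffEval_fiber_pair {K : Type*} [Field K] [Fintype K] [DecidableEq K]
    (hm : 2 ≤ m) {a a' : K} (h : a ≠ a') (b b' : K) :
    #{y : Fin m → K | coeffEval m a y = b ∧ coeffEval m a' y = b'} = Fintype.card K ^ (m - 2) := by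
  have hcard := ((coeffEval m a).prod (coeffEval m a')).card_fiber_mul_card_eq
    (coeffEval_prod_surjective hm h) (b, b')
  simp only [AddMonoidHom.prod_apply, Prod.mk.injEq, Fintype.card_prod, Fintype.card_fun,
    Fintype.card_fin] at hcard
  rw [← pow_sub_mul_pow _ hm, sq] at hcard
  exact Nat.eq_of_mul_eq_mul_right (by positivity) hcard

end CoeffEval

section DoubleCounting

variable {X Y : Type*} [Fintype Y] (Adj : X → Y → Prop) [∀ x y, Decidable (Adj x y)]
  (S : Finset X)

lemma sum_card_bipartiteBelow_eq_card_mul {d : ℕ}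
    (hd : ∀ x ∈ S, #(univ.bipartiteAbove Adj x) = d) :
    ∑ y, #(S.bipartiteBelow Adj y) = #S * d := by
  rw [← sum_card_bipartiteAbove_eq_sum_card_bipartiteBelow, sum_congr rfl hd, sum_const,
    smul_eq_mul]

lemma sum_card_bipartiteBelow_sq :
    ∑ y, #(S.bipartiteBelow Adj y) ^ 2 = ∑ x ∈ S, ∑ x' ∈ S, #{y | Adj x y ∧ Adj x' y} := by
  have hsq (y : Y) : #(S.bipartiteBelow Adj y) ^ 2 =
      #((S ×ˢ S).bipartiteBelow (fun p y => Adj p.1 y ∧ Adj p.2 y) y) := by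
    rw [sq, ← card_product, bipartiteBelow, bipartiteBelow, ← filter_product]
  simp_rw [hsq, ← sum_card_bipartiteAbove_eq_sum_card_bipartiteBelow, sum_product]
  rfl

lemma sum_card_bipartiteBelow_sq_le {d e : ℕ}
    (hd : ∀ x ∈ S, #(univ.bipartiteAbove Adj x) = d)
    (he : ∀ x ∈ S, ∀ x' ∈ S, x ≠ x' → #{y | Adj x y ∧ Adj x' y} ≤ e) :
    ∑ y, #(S.bipartiteBelow Adj y) ^ 2 ≤ #S * d + #S ^ 2 * e := by
  classical
  rw [sum_card_bipartiteBelow_sq]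
  calc ∑ x ∈ S, ∑ x' ∈ S, #{y | Adj x y ∧ Adj x' y}
      ≤ ∑ x ∈ S, ∑ x' ∈ S, ((if x = x' then d else 0) + e) := by
        refine sum_le_sum fun x hx => sum_le_sum fun x' hx' => ?_
        by_cases hxx : x = x'
        · subst hxx
          simp only [and_self, if_true, ← hd x hx]
          exact Nat.le_add_right _ _
        · simpa [hxx] using he x hx x' hx' hxx
    _ = #S * d + #S ^ 2 * e := by
        simp [sum_add_distrib, sum_ite_eq, sq, mul_assoc]

end DoubleCounting

section Chebyshev

variable {ι : Type*}

lemma card_filter_lt_abs_sub_mul_sq_le (s : Finset ι) (f : ι → ℝ) (c : ℝ) {t : ℝ} (ht : 0 ≤ t) :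
    #{i ∈ s | t < |f i - c|} * t ^ 2 ≤ ∑ i ∈ s, (f i - c) ^ 2 :=
  calc (#{i ∈ s | t < |f i - c|} : ℝ) * t ^ 2 = #{i ∈ s | t < |f i - c|} • t ^ 2 := by
        rw [nsmul_eq_mul]
    _ ≤ ∑ i ∈ s with t < |f i - c|, (f i - c) ^ 2 := card_nsmul_le_sum _ _ _ fun i hi => by
        rw [← sq_abs (f i - c)]
        exact pow_le_pow_left₀ ht (mem_filter.mp hi).2.le 2
    _ ≤ ∑ i ∈ s, (f i - c) ^ 2 :=
        sum_le_sum_of_subset_of_nonneg (filter_subset _ _) fun _ _ _ => sq_nonneg _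

variable [Fintype ι]

lemma sum_sub_sq_le_of_sum_sq_le (f : ι → ℝ) {r : ℝ} (h₁ : ∑ i, f i = Fintype.card ι * r)
    (h₂ : ∑ i, f i ^ 2 ≤ Fintype.card ι * (r ^ 2 + r)) :
    ∑ i, (f i - r) ^ 2 ≤ Fintype.card ι * r := by
  have : ∑ i, (f i - r) ^ 2 = ∑ i, f i ^ 2 - 2 * r * ∑ i, f i + Fintype.card ι * r ^ 2 := by
    simp only [sub_sq, sum_add_distrib, sum_sub_distrib, ← sum_mul, ← mul_sum, sum_const,
      card_univ, nsmul_eq_mul]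
    ring
  rw [this, h₁]
  linarith

lemma le_card_filter_abs_sub_le (f : ι → ℝ) {r δ : ℝ} (hr : 0 < r) (hδ : 0 < δ)
    (hvar : ∑ i, (f i - r) ^ 2 ≤ Fintype.card ι * r) :
    (1 - 1 / (δ ^ 2 * r)) * Fintype.card ι ≤ #{i | |f i - r| ≤ δ * r} := by
  have hbad := (card_filter_lt_abs_sub_mul_sq_le univ f r (by positivity : 0 ≤ δ * r)).trans hvar
  have hsplit := card_filter_add_card_filter_not (s := univ) fun i => |f i - r| ≤ δ * r
  simp only [not_le, card_univ] at hsplit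
  rw [← hsplit] at hbad ⊢
  push_cast at hbad ⊢
  rw [one_sub_div (by positivity), div_mul_eq_mul_div, div_le_iff₀ (by positivity)]
  nlinarith

end Chebyshev

section Gamma

variable {𝔽 : Type*} [Field 𝔽]

/-- Adjacency in `Γ_{q,m}`: the point `x` lies on the graph of the polynomial `∑ yᵢ Xⁱ`. -/
abbrev GammaAdj (m : ℕ) (x : 𝔽 × 𝔽) (y : Fin m → 𝔽) : Prop := x.2 = coeffEval m x.1 y

variable [DecidableEq 𝔽] {m : ℕ}

lemma bipartiteBelow_gammaAdj (S : Finset (𝔽 × 𝔽)) (y : Fin m → 𝔽) :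
    S.bipartiteBelow (GammaAdj m) y = {x ∈ S | x.2 = ∑ i, y i * x.1 ^ (i : ℕ)} := rfl

variable [Fintype 𝔽]

lemma card_bipartiteAbove_gammaAdj (hm : 0 < m) (x : 𝔽 × 𝔽) :
    #(univ.bipartiteAbove (GammaAdj m) x) = Fintype.card 𝔽 ^ (m - 1) := by
  simp_rw [bipartiteAbove, GammaAdj, eq_comm (a := x.2)]
  exact card_coeffEval_fiber hm x.1 x.2

lemma card_common_gammaAdj_le (hm : 2 ≤ m) {x x' : 𝔽 × 𝔽} (h : x ≠ x') :
    #{y | GammaAdj m x y ∧ GammaAdj m x' y} ≤ Fintype.card 𝔽 ^ (m - 2) := by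
  by_cases h₁ : x.1 = x'.1
  · have h₂ : x.2 ≠ x'.2 := fun h₂ => h (Prod.ext h₁ h₂)
    rw [filter_false_of_mem fun y _ ⟨hy, hy'⟩ => h₂ (by rw [hy, hy', h₁]), card_empty]
    exact Nat.zero_le _
  · simp_rw [GammaAdj, eq_comm (a := x.2), eq_comm (a := x'.2)]
    exact (card_coeffEval_fiber_pair hm h₁ x.2 x'.2).le

theorem one_sub_div_mul_pow_le_card_abs_sub_le (hm : 2 ≤ m) (S : Finset (𝔽 × 𝔽))
    (hS : S.Nonempty) {r : ℝ} (hr : r = #S / Fintype.card 𝔽) {δ : ℝ} (hδ : 0 < δ) :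
    (1 - 1 / (δ ^ 2 * r)) * (Fintype.card 𝔽 : ℝ) ^ m ≤
      #{y : Fin m → 𝔽 | |(#(S.bipartiteBelow (GammaAdj m) y) : ℝ) - r| ≤ δ * r} := by
  obtain ⟨n, rfl⟩ : ∃ n, m = n + 2 := ⟨m - 2, by omega⟩
  have hdeg := sum_card_bipartiteBelow_eq_card_mul (GammaAdj (n + 2)) S fun x _ =>
    card_bipartiteAbove_gammaAdj (by omega) x
  have hcodeg := sum_card_bipartiteBelow_sq_le (GammaAdj (n + 2)) S
    (fun x _ => card_bipartiteAbove_gammaAdj (by omega) x)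
    fun x _ x' _ h => card_common_gammaAdj_le hm h
  set q := Fintype.card 𝔽
  have hq : (q : ℝ) ≠ 0 := by positivity
  have hSr : (#S : ℝ) = r * q := by rw [hr]; field_simp
  have hr₀ : 0 < r := by rw [hr]; have := card_pos.mpr hS; positivity
  have hcard : (Fintype.card (Fin (n + 2) → 𝔽) : ℝ) = q ^ (n + 2) := by simp [q]
  have h₁ : ∑ y, (#(S.bipartiteBelow (GammaAdj (n + 2)) y) : ℝ) = q ^ (n + 2) * r := by
    rw [← Nat.cast_sum, hdeg]
    push_cast
    rw [hSr]
    ring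
  have h₂ : ∑ y, (#(S.bipartiteBelow (GammaAdj (n + 2)) y) : ℝ) ^ 2 ≤
      q ^ (n + 2) * (r ^ 2 + r) := by
    have := (Nat.cast_le (α := ℝ)).mpr hcodeg
    push_cast at this
    rw [hSr] at this
    exact this.trans_eq (by ring)
  rw [← hcard] at h₁ h₂ ⊢
  exact le_card_filter_abs_sub_le _ hr₀ hδ (sum_sub_sq_le_of_sum_sq_le _ h₁ h₂)

end Gamma

theorem statement11_general (k q : ℕ) (hk : 3 ≤ k)
    (𝔽 : Type) [Field 𝔽] [Fintype 𝔽] [DecidableEq 𝔽] (hq : Fintype.card 𝔽 = q)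
    (S : Finset (𝔽 × 𝔽)) (hS : S.Nonempty)
    (r : ℝ) (hr : r = (S.card : ℝ) / q)
    (δ : ℝ) (hδ₀ : 0 < δ) :
    (1 - 2 / (δ ^ 2 * r)) * (q : ℝ) ^ (k - 1) ≤
      (((Finset.univ : Finset (Fin (k - 1) → 𝔽)).filter fun y =>
          (1 - δ) * r ≤
            ((S.filter fun x =>
              x.2 = ∑ i : Fin (k - 1), y i * x.1 ^ (i : ℕ)).card : ℝ) ∧
          ((S.filter fun x =>
              x.2 = ∑ i : Fin (k - 1), y i * x.1 ^ (i : ℕ)).card : ℝ) ≤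
            (1 + δ) * r).card : ℝ) := by
  subst hq
  calc (1 - 2 / (δ ^ 2 * r)) * (Fintype.card 𝔽 : ℝ) ^ (k - 1)
      ≤ (1 - 1 / (δ ^ 2 * r)) * (Fintype.card 𝔽 : ℝ) ^ (k - 1) := by
        gcongr
        · rw [hr]; positivity
        · norm_num
    _ ≤ _ := one_sub_div_mul_pow_le_card_abs_sub_le (by omega) S hS hr hδ₀
    _ = _ := by
        norm_cast
        refine congrArg card (filter_congr fun y _ => ?_)
        rw [bipartiteBelow_gammaAdj, abs_sub_le_iff]
        constructor <;> rintro ⟨h₁, h₂⟩ <;> constructor <;> linarith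

/-- Let `S ⊆ X = 𝔽²` be nonempty, `r = |S|/q`, and `0 < δ < 1`.
The set `Y_δ` of all `y ∈ Y = 𝔽^{k-1}` with `(1-δ)r ≤ |N(y) ∩ S| ≤ (1+δ)r`
satisfies `|Y_δ| ≥ (1 - 2/(δ²r)) · q^{k-1}`. -/
theorem statement11 (k q : ℕ) (hk : 3 ≤ k)
    (𝔽 : Type) [Field 𝔽] [Fintype 𝔽] [DecidableEq 𝔽] (hq : Fintype.card 𝔽 = q)
    (S : Finset (𝔽 × 𝔽)) (hS : S.Nonempty)
    (r : ℝ) (hr : r = (S.card : ℝ) / q)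
    (δ : ℝ) (hδ₀ : 0 < δ) (hδ₁ : δ < 1) :
    (1 - 2 / (δ ^ 2 * r)) * (q : ℝ) ^ (k - 1) ≤
      (((Finset.univ : Finset (Fin (k - 1) → 𝔽)).filter fun y =>
          (1 - δ) * r ≤
            ((S.filter fun x =>
              x.2 = ∑ i : Fin (k - 1), y i * x.1 ^ (i : ℕ)).card : ℝ) ∧
          ((S.filter fun x =>
              x.2 = ∑ i : Fin (k - 1), y i * x.1 ^ (i : ℕ)).card : ℝ) ≤
            (1 + δ) * r).card : ℝ) :=
  statement11_general k q hk 𝔽 hq S hS r hr δ hδ₀
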